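/- Let m be an integer, let q₀ be a squarefree positive integer, and let R₀ be a finite set of integers. Then for every positive integer q, f(q) = ∑_{d ∣ q} g(d) · h(q/d); that is, f is the Dirichlet convolution of g and h. -/

import Mathlib

/-- `e(x) = exp(2πix)`. -/
noncomputable def e (x : ℝ) : ℂ := Complex.exp (2 * (Real.pi : ℂ) * Complex.I * (x : ℂ))

/-- `(μ/φ)(n) = μ(n)/φ(n)`. -/
noncomputable def muphi (n : ℕ) : ℂ :=
  ((ArithmeticFunction.moebius n : ℤ) : ℂ) / (Nat.totient n : ℂ)

/-- `f(q) = q₀⁻³ ∑_{1 ≤ a ≤ q, (a,q)=1} e(-am/q)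
  (∑_{ℓ=0}^{q₀-1} (μ/φ)(qq₀/gcd(qq₀, aq₀+ℓq)) ∑_{r ∈ R₀} e(-ℓr/q₀))³`. -/
noncomputable def f (m : ℤ) (q₀ : ℕ) (R₀ : Finset ℤ) (q : ℕ) : ℂ :=
  ((q₀ : ℂ) ^ 3)⁻¹ * ∑ a ∈ (Finset.Icc 1 q).filter (fun a => Nat.gcd a q = 1),
    e (-((a : ℝ) * (m : ℝ) / (q : ℝ))) *
      (∑ ℓ ∈ Finset.range q₀,
        muphi ((q * q₀) / Nat.gcd (q * q₀) (a * q₀ + ℓ * q)) *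
          ∑ r ∈ R₀, e (-((ℓ : ℝ) * (r : ℝ) / (q₀ : ℝ)))) ^ 3

/-- `g(w) = 0` unless `w ∣ q₀`, in which case
`g(w) = q₀⁻³ ∑_{1 ≤ a ≤ w, (a,w)=1} e(-am/w)
  (∑_{ℓ=0}^{q₀-1} (μ/φ)(q₀/gcd(q₀, a(q₀/w)+ℓ)) ∑_{r ∈ R₀} e(-ℓr/q₀))³`. -/
noncomputable def g (m : ℤ) (q₀ : ℕ) (R₀ : Finset ℤ) (w : ℕ) : ℂ :=
  if w ∣ q₀ then
    ((q₀ : ℂ) ^ 3)⁻¹ * ∑ a ∈ (Finset.Icc 1 w).filter (fun a => Nat.gcd a w = 1),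
      e (-((a : ℝ) * (m : ℝ) / (w : ℝ))) *
        (∑ ℓ ∈ Finset.range q₀,
          muphi (q₀ / Nat.gcd q₀ (a * (q₀ / w) + ℓ)) *
            ∑ r ∈ R₀, e (-((ℓ : ℝ) * (r : ℝ) / (q₀ : ℝ)))) ^ 3
  else 0

/-- `h(v) = 0` if `gcd(v, q₀) > 1`, and otherwise
`h(v) = (μ(v)/φ(v)³) ∑_{1 ≤ a ≤ v, (a,v)=1} e(-am/v)`. -/
noncomputable def h (m : ℤ) (q₀ : ℕ) (v : ℕ) : ℂ :=
  if 1 < Nat.gcd v q₀ then 0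
  else ((ArithmeticFunction.moebius v : ℤ) : ℂ) / (Nat.totient v : ℂ) ^ 3 *
    ∑ a ∈ (Finset.Icc 1 v).filter (fun a => Nat.gcd a v = 1),
      e (-((a : ℝ) * (m : ℝ) / (v : ℝ)))

/-! Write `q = w v` with `w = gcd(q, q₀)`. Only `d = w` can contribute to the convolution:
`g d = 0` unless `d ∣ q₀`, and for a proper divisor `d` of `w` the integer `w / d > 1` divides
both `q / d` and `q₀`, so that `h (q / d) = 0`.

If `v` is coprime to `q₀`, the Chinese remainder map `(b, c) ↦ b v + c w` is a bijection from the
reduced residues modulo `w` and modulo `v` onto those modulo `w v`. At `a = b v + c w` the phase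
factors as `e(-bm/w) e(-cm/v)`, and `q q₀ / gcd(q q₀, a q₀ + ℓ q) = v · q₀ / gcd(q₀, b q₀/w + ℓ)`,
so each `μ/φ` term splits off `(μ/φ)(v)`, whose cube is `μ(v)/φ(v)³`. Hence `f(q) = g(w) h(v)`.

Otherwise a prime `p` divides both `v` and `q₀`, so `p² ∣ q` while `p ∥ q₀` (as `q₀` is
squarefree). Since `p ∤ a`, this gives `p ∥ a q₀ + ℓ q`, hence `p² ∣ q q₀ / gcd(q q₀, a q₀ + ℓ q)`:
every `μ/φ` term of `f(q)` vanishes, and so does `h(v)`.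
-/

open Finset ArithmeticFunction

lemma e_add (x y : ℝ) : e (x + y) = e x * e y := by
  simp only [e, ← Complex.exp_add]; push_cast; ring_nf

lemma e_intCast (n : ℤ) : e n = 1 := by
  rw [e, ← Complex.exp_int_mul_two_pi_mul_I n]; push_cast; ring_nf

lemma periodic_e_neg_mul_div (m : ℤ) {q : ℕ} (hq : q ≠ 0) :
    Function.Periodic (fun a : ℕ => e (-((a : ℝ) * m / q))) q := by
  intro a
  have hshift : -(((a + q : ℕ) : ℝ) * m / q) = -((a : ℝ) * m / q) + ((-m : ℤ) : ℝ) := by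
    push_cast; field_simp; ring
  simp only [hshift, e_add, e_intCast, mul_one]

lemma e_neg_mul_div_mul (m : ℤ) {w v : ℕ} (hw : w ≠ 0) (hv : v ≠ 0) (b c : ℕ) :
    e (-(((b * v + c * w : ℕ) : ℝ) * m / ((w * v : ℕ) : ℝ))) =
      e (-((b : ℝ) * m / w)) * e (-((c : ℝ) * m / v)) := by
  rw [← e_add]; congr 1; push_cast; field_simp; ring

lemma muphi_mul {a b : ℕ} (h : a.Coprime b) : muphi (a * b) = muphi a * muphi b := by
  simp only [muphi, isMultiplicative_moebius.map_mul_of_coprime h, Nat.totient_mul h]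
  push_cast
  rw [div_mul_div_comm]

lemma muphi_pow_three (n : ℕ) : muphi n ^ 3 = (moebius n : ℂ) / (n.totient : ℂ) ^ 3 := by
  have hμ : (moebius n : ℂ) ^ 3 = moebius n := by
    by_cases hn : Squarefree n
    · rw [pow_succ, ← Int.cast_pow, moebius_sq_eq_one_of_squarefree hn, Int.cast_one, one_mul]
    · simp [moebius_eq_zero_of_not_squarefree hn]
  rw [muphi, div_pow, hμ]

lemma muphi_eq_zero_of_not_squarefree {n : ℕ} (hn : ¬ Squarefree n) : muphi n = 0 := by
  simp [muphi, moebius_eq_zero_of_not_squarefree hn]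

lemma not_squarefree_div_gcd {p q q₀ a ℓ : ℕ} (hp : p.Prime) (hq : q ≠ 0) (hq₀ : Squarefree q₀)
    (hpq₀ : p ∣ q₀) (hpq : p ^ 2 ∣ q) (hpa : ¬ p ∣ a) :
    ¬ Squarefree (q * q₀ / Nat.gcd (q * q₀) (a * q₀ + ℓ * q)) := by
  set x := a * q₀ + ℓ * q
  have hN : q * q₀ ≠ 0 := mul_ne_zero hq hq₀.ne_zero
  have hx : x ≠ 0 := by
    have ha : a ≠ 0 := by rintro rfl; exact hpa (dvd_zero p)
    have : a * q₀ ≠ 0 := mul_ne_zero ha hq₀.ne_zero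
    omega
  have hp2x : ¬ p ^ 2 ∣ x := by
    intro hdvd
    have hp2 : p ^ 2 ∣ q₀ :=
      (Nat.Coprime.pow_left 2 (hp.coprime_iff_not_dvd.2 hpa)).dvd_of_dvd_mul_left
        ((Nat.dvd_add_left (hpq.mul_left ℓ)).1 hdvd)
    exact hp.not_isUnit (hq₀ p (by rwa [← sq]))
  have hN3 : 3 ≤ (q * q₀).factorization p :=
    (hp.pow_dvd_iff_le_factorization hN).1 (by rw [pow_succ]; exact mul_dvd_mul hpq hpq₀)
  have hx1 : x.factorization p ≤ 1 := by
    by_contra! h2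
    exact hp2x ((hp.pow_dvd_iff_le_factorization hx).2 h2)
  intro hsq
  have := hsq.natFactorization_le_one p
  rw [Nat.factorization_div (Nat.gcd_dvd_left _ _), Finsupp.tsub_apply,
    Nat.factorization_gcd hN hx, Finsupp.inf_apply] at this
  omega

lemma f_eq_zero_of_prime_sq_dvd (m : ℤ) {q₀ : ℕ} (hq₀ : Squarefree q₀) (R₀ : Finset ℤ) {p q : ℕ}
    (hp : p.Prime) (hq : q ≠ 0) (hpq₀ : p ∣ q₀) (hpq : p ^ 2 ∣ q) : f m q₀ R₀ q = 0 := by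
  rw [f, sum_eq_zero, mul_zero]
  intro a ha
  have hpa : ¬ p ∣ a := fun hpa => hp.not_dvd_one
    ((mem_filter.1 ha).2 ▸ Nat.dvd_gcd hpa ((dvd_pow_self p two_ne_zero).trans hpq))
  simp [muphi_eq_zero_of_not_squarefree (not_squarefree_div_gcd hp hq hq₀ hpq₀ hpq hpa)]

lemma sum_divisors_mul_eq_single_gcd {M : Type*} [NonUnitalNonAssocSemiring M] {q₀ q : ℕ}
    (hq : 0 < q) {G H : ℕ → M} (hG : ∀ d, ¬ d ∣ q₀ → G d = 0)
    (hH : ∀ v, 1 < Nat.gcd v q₀ → H v = 0) :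
    ∑ d ∈ q.divisors, G d * H (q / d) = G (q.gcd q₀) * H (q / q.gcd q₀) := by
  set w := q.gcd q₀
  refine sum_eq_single_of_mem _ (Nat.mem_divisors.2 ⟨Nat.gcd_dvd_left q q₀, hq.ne'⟩)
    fun d hd hdw => ?_
  obtain ⟨hdq, -⟩ := Nat.mem_divisors.1 hd
  by_cases hdq₀ : d ∣ q₀
  · have hdw' : d ∣ w := Nat.dvd_gcd hdq hdq₀
    have hw : 0 < w := Nat.gcd_pos_of_pos_left _ hq
    have hk : 1 < w / d := by
      have hk0 : 0 < w / d := Nat.div_pos (Nat.le_of_dvd hw hdw') (Nat.pos_of_dvd_of_pos hdw' hw)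
      have hk1 : w / d ≠ 1 := fun h1 => hdw (Nat.eq_of_dvd_of_div_eq_one hdw' h1)
      omega
    have hk_dvd : w / d ∣ Nat.gcd (q / d) q₀ :=
      Nat.dvd_gcd (Nat.div_dvd_div hdw' (Nat.gcd_dvd_left q q₀))
        ((Nat.div_dvd_of_dvd hdw').trans (Nat.gcd_dvd_right q q₀))
    have hqd : 0 < q / d := Nat.div_pos (Nat.le_of_dvd hq hdq) (Nat.pos_of_dvd_of_pos hdq hq)
    rw [hH _ (hk.trans_le (Nat.le_of_dvd (Nat.gcd_pos_of_pos_left _ hqd) hk_dvd)), mul_zero]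
  · rw [hG d hdq₀, zero_mul]

lemma sum_Icc_one_eq_sum_range {M : Type*} [AddCancelCommMonoid M] {q : ℕ} {F : ℕ → M}
    (hF : F q = F 0) : ∑ a ∈ Icc 1 q, F a = ∑ a ∈ range q, F a := by
  have h := sum_Ico_succ_top (Nat.zero_le q) F
  rw [sum_eq_sum_Ico_succ_bot (Nat.succ_pos q), hF, add_comm, zero_add, Nat.succ_eq_add_one,
    Ico_add_one_right_eq_Icc] at h
  rw [range_eq_Ico, add_right_cancel h]

lemma sum_coprime_Icc_eq_sum_coprime_range {M : Type*} [AddCancelCommMonoid M] {q : ℕ}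
    {F : ℕ → M} (hF : F q = F 0) :
    ∑ a ∈ Icc 1 q with a.gcd q = 1, F a = ∑ a ∈ range q with a.gcd q = 1, F a := by
  rw [sum_filter, sum_filter]
  exact sum_Icc_one_eq_sum_range (by simp only [Nat.gcd_self, Nat.gcd_zero_left, hF])

lemma card_range_filter_gcd_eq_one (n : ℕ) : #{a ∈ range n | a.gcd n = 1} = n.totient := by
  simp only [Nat.totient_eq_card_coprime, Nat.Coprime, Nat.gcd_comm]

lemma eq_of_mul_add_mul_modEq {w v b b' c c' : ℕ} (hwv : w.Coprime v) (hb : b < w) (hb' : b' < w)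
    (h : b * v + c * w ≡ b' * v + c' * w [MOD w]) : b = b' := by
  unfold Nat.ModEq at h
  rw [Nat.add_mul_mod_self_right, Nat.add_mul_mod_self_right] at h
  exact (Nat.ModEq.cancel_right_of_coprime hwv h).eq_of_lt_of_lt hb hb'

lemma sum_coprime_range_mul_eq_sum_sum {M : Type*} [AddCommMonoid M] {w v : ℕ} (hwv : w.Coprime v)
    {F : ℕ → M} (hF : Function.Periodic F (w * v)) :
    ∑ a ∈ range (w * v) with a.gcd (w * v) = 1, F a =
      ∑ b ∈ range w with b.gcd w = 1, ∑ c ∈ range v with c.gcd v = 1, F (b * v + c * w) := by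
  set crt : ℕ × ℕ → ℕ := fun x => (x.1 * v + x.2 * w) % (w * v)
  have hmaps : ∀ x ∈ {b ∈ range w | b.gcd w = 1} ×ˢ {c ∈ range v | c.gcd v = 1},
      crt x ∈ {a ∈ range (w * v) | a.gcd (w * v) = 1} := by
    simp only [mem_product, mem_filter, mem_range, and_imp, Prod.forall]
    intro b c hb hbw hc hcv
    refine ⟨Nat.mod_lt _ (Nat.mul_pos (by omega) (by omega)), ?_⟩
    change ((b * v + c * w) % (w * v)).gcd (w * v) = 1
    rw [← Nat.gcd_rec]
    exact Nat.Coprime.mul_left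
      ((Nat.coprime_add_mul_right_right _ _ _).2 ((Nat.Coprime.symm hbw).mul_right hwv))
      ((Nat.coprime_mul_right_add_right _ _ _).2 ((Nat.Coprime.symm hcv).mul_right hwv.symm))
  have hinj : Set.InjOn crt ↑({b ∈ range w | b.gcd w = 1} ×ˢ {c ∈ range v | c.gcd v = 1}) := by
    simp only [coe_product, coe_filter, mem_range]
    rintro ⟨b, c⟩ ⟨⟨hb, -⟩, ⟨hc, -⟩⟩ ⟨b', c'⟩ ⟨⟨hb', -⟩, ⟨hc', -⟩⟩ h
    have h' : b * v + c * w ≡ b' * v + c' * w [MOD w * v] := h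
    refine Prod.ext (eq_of_mul_add_mul_modEq hwv hb hb' (h'.of_mul_right v)) ?_
    refine eq_of_mul_add_mul_modEq hwv.symm hc hc' (b := c) (c := b) (c' := b') ?_
    rw [add_comm, add_comm (c' * w)]
    exact h'.of_mul_left w
  have hcard : #{a ∈ range (w * v) | a.gcd (w * v) = 1} ≤
      #({b ∈ range w | b.gcd w = 1} ×ˢ {c ∈ range v | c.gcd v = 1}) := by
    simp only [card_product, card_range_filter_gcd_eq_one, Nat.totient_mul hwv, le_refl]
  rw [← sum_product']
  symm
  exact sum_nbij crt hmaps hinj (surjOn_of_injOn_of_card_le crt hmaps hinj hcard)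
    fun x _ => (hF.map_mod_nat _).symm

lemma periodic_e_mul_sum_muphi_pow (m : ℤ) {p k N : ℕ} (hp : p ≠ 0) (hN : p * k = N) (s : Finset ℕ)
    (t : ℕ → ℕ) (T : ℕ → ℂ) :
    Function.Periodic (fun a : ℕ => e (-((a : ℝ) * m / p)) *
      (∑ ℓ ∈ s, muphi (N / Nat.gcd N (a * k + t ℓ)) * T ℓ) ^ 3) p := by
  intro a
  have hshift : ∀ ℓ, (a + p) * k + t ℓ = a * k + t ℓ + N := fun ℓ => by rw [← hN]; ring
  simp only [periodic_e_neg_mul_div m hp a, hshift, Nat.gcd_add_self_right]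

lemma div_gcd_mul_add_mul {w v q₀ b c ℓ : ℕ} (hw0 : 0 < w) (hw : w ∣ q₀) (hv : v.Coprime q₀)
    (hc : c.Coprime v) :
    w * v * q₀ / Nat.gcd (w * v * q₀) ((b * v + c * w) * q₀ + ℓ * (w * v)) =
      v * (q₀ / Nat.gcd q₀ (b * (q₀ / w) + ℓ)) := by
  obtain ⟨k, rfl⟩ := hw
  rw [Nat.mul_div_cancel_left k hw0]
  have hx : (b * v + c * w) * (w * k) + ℓ * (w * v) = w * (v * (b * k + ℓ) + c * (w * k)) := by
    ring
  have hvx : v.Coprime (v * (b * k + ℓ) + c * (w * k)) :=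
    (Nat.coprime_mul_left_add_right _ _ _).2 (hc.symm.mul_right hv)
  rw [hx, show w * v * (w * k) = w * (v * (w * k)) by ring, Nat.gcd_mul_left,
    Nat.Coprime.gcd_mul_left_cancel _ hvx, Nat.gcd_add_mul_right_right,
    Nat.Coprime.gcd_mul_left_cancel_right _ hv, Nat.mul_div_mul_left _ _ hw0,
    Nat.mul_div_assoc _ (Nat.gcd_dvd_left _ _)]

lemma sum_muphi_div_gcd_mul_add_mul {w v q₀ b c : ℕ} (hw0 : 0 < w) (hw : w ∣ q₀)
    (hv : v.Coprime q₀) (hc : c.Coprime v) (s : Finset ℕ) (T : ℕ → ℂ) :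
    ∑ ℓ ∈ s, muphi (w * v * q₀ / Nat.gcd (w * v * q₀) ((b * v + c * w) * q₀ + ℓ * (w * v))) * T ℓ =
      muphi v * ∑ ℓ ∈ s, muphi (q₀ / Nat.gcd q₀ (b * (q₀ / w) + ℓ)) * T ℓ := by
  rw [mul_sum]
  refine sum_congr rfl fun ℓ _ => ?_
  rw [div_gcd_mul_add_mul hw0 hw hv hc,
    muphi_mul (hv.coprime_dvd_right (Nat.div_dvd_of_dvd (Nat.gcd_dvd_left _ _))), mul_assoc]

lemma f_mul_eq_g_mul_h (m : ℤ) {q₀ : ℕ} (R₀ : Finset ℤ) {w v : ℕ} (hw0 : 0 < w) (hv0 : 0 < v)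
    (hw : w ∣ q₀) (hv : v.Coprime q₀) : f m q₀ R₀ (w * v) = g m q₀ R₀ w * h m q₀ v := by
  have hwv : w.Coprime v := (hv.coprime_dvd_right hw).symm
  rw [f, g, if_pos hw, h, if_neg (by rw [hv]; exact lt_irrefl 1),
    sum_coprime_Icc_eq_sum_coprime_range
      (periodic_e_mul_sum_muphi_pow m (by positivity) rfl _ _ _).eq,
    sum_coprime_Icc_eq_sum_coprime_range
      (periodic_e_mul_sum_muphi_pow m hw0.ne' (Nat.mul_div_cancel' hw) _ _ _).eq,
    sum_coprime_Icc_eq_sum_coprime_range (periodic_e_neg_mul_div m hv0.ne').eq,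
    sum_coprime_range_mul_eq_sum_sum hwv (periodic_e_mul_sum_muphi_pow m (by positivity) rfl _ _ _),
    mul_assoc ((q₀ : ℂ) ^ 3)⁻¹]
  congr 1
  rw [mul_sum, sum_mul_sum]
  refine sum_congr rfl fun b _ => sum_congr rfl fun c hc => ?_
  rw [e_neg_mul_div_mul m hw0.ne' hv0.ne',
    sum_muphi_div_gcd_mul_add_mul hw0 hw hv (mem_filter.1 hc).2, mul_pow, muphi_pow_three]
  ring

theorem f_eq_g_conv_h_general (m : ℤ) (q₀ : ℕ) (hsf : Squarefree q₀)
    (R₀ : Finset ℤ) (q : ℕ) (hq : 0 < q) :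
    f m q₀ R₀ q = ∑ d ∈ q.divisors, g m q₀ R₀ d * h m q₀ (q / d) := by
  rw [sum_divisors_mul_eq_single_gcd hq (fun d hd => by rw [g, if_neg hd])
    (fun v hv => by rw [h, if_pos hv])]
  set w := q.gcd q₀
  set v := q / w
  have hwq : w ∣ q := Nat.gcd_dvd_left q q₀
  have hw0 : 0 < w := Nat.gcd_pos_of_pos_left q₀ hq
  have hq_eq : q = w * v := (Nat.mul_div_cancel' hwq).symm
  have hv0 : 0 < v := Nat.div_pos (Nat.le_of_dvd hq hwq) hw0
  by_cases hv : v.Coprime q₀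
  · conv_lhs => rw [hq_eq]
    exact f_mul_eq_g_mul_h m R₀ hw0 hv0 (Nat.gcd_dvd_right q q₀) hv
  · obtain ⟨p, hp, hpv, hpq₀⟩ := Nat.Prime.not_coprime_iff_dvd.1 hv
    have hpw : p ∣ w := Nat.dvd_gcd (hpv.trans (Nat.div_dvd_of_dvd hwq)) hpq₀
    have hpq : p ^ 2 ∣ q := by rw [hq_eq, sq]; exact mul_dvd_mul hpw hpv
    have hgcd : 1 < v.gcd q₀ := by
      have := Nat.gcd_pos_of_pos_left q₀ hv0
      unfold Nat.Coprime at hv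
      omega
    rw [f_eq_zero_of_prime_sq_dvd m hsf R₀ hp hq.ne' hpq₀ hpq, h, if_pos hgcd, mul_zero]

/-- `f` is the Dirichlet convolution of `g` and `h`. -/
theorem f_eq_g_conv_h (m : ℤ) (q₀ : ℕ) (hq₀ : 0 < q₀) (hsf : Squarefree q₀)
    (R₀ : Finset ℤ) (q : ℕ) (hq : 0 < q) :
    f m q₀ R₀ q = ∑ d ∈ q.divisors, g m q₀ R₀ d * h m q₀ (q / d) :=
  f_eq_g_conv_h_general m q₀ hsf R₀ q hq
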